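/- arXiv:1812.01128 — 5 statements merged into one kernel-verified Lean document; each statement's English description precedes it below -/
import Mathlib

section
/- Let R be an integral domain which is integrally closed in its fraction field K, and let g ∈ GL_n(K) be a matrix of finite order (g^m = 1 for some m ≥ 1) whose characteristic polynomial splits over K. Then g is conjugate in GL_n(K) to a matrix defined over R: there exist h ∈ GL_n(K) and g₀ ∈ GL_n(R) such that h⁻¹ · g · h equals the image of g₀ under the canonical map GL_n(R) → GL_n(K). -/
/-!
Since the characteristic polynomial splits, `g` has an eigenvalue `μ`, and any hyperplane
containing the range of `g - μ` is `g`-stable; induction on the dimension makes `g` upper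
triangular over `K`. Its diagonal entries are eigenvalues of `g`, hence `m`-th roots of unity,
hence lie in the integrally closed ring `R`. If `a ∈ R` clears all denominators, conjugating by
`diag(a⁰, a¹, a², …)` multiplies the `(i, j)` entry by `a^(j - i)`, which makes the entries
above the diagonal integral too. A matrix over `R` of finite order is invertible over `R`.
-/

open Polynomial Module

theorem Module.Basis.isUpperTriangular_toMatrix_iff {R M ι : Type*} [CommRing R]
    [AddCommGroup M] [Module R M] [Fintype ι] [DecidableEq ι] [LinearOrder ι]
    (b : Basis ι R M) (f : M →ₗ[R] M) :
    (LinearMap.toMatrix b b f).IsUpperTriangular ↔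
      ∀ j, f (b j) ∈ Submodule.span R (b '' Set.Iic j) := by
  simp only [Basis.mem_span_image, Matrix.BlockTriangular, LinearMap.toMatrix_apply, id,
    Set.subset_def, Finset.mem_coe, Finsupp.mem_support_iff, Set.mem_Iic]
  exact ⟨fun h j i => not_imp_comm.mp fun hij => h (not_le.mp hij),
    fun h i j hji => by_contra fun hne => (h j i hne).not_gt hji⟩

namespace Module.End

variable {K V : Type*} [Field K] [AddCommGroup V] [Module K V]

theorem aeval_restrict_apply (f : End K V) {N : Submodule K V} (hN : ∀ x ∈ N, f x ∈ N)
    (q : K[X]) (x : N) : (aeval (f.restrict hN) q x : V) = aeval f q x := by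
  simp [aeval_eq_sum_range, pow_restrict _ hN]

theorem minpoly_restrict_dvd [FiniteDimensional K V] (f : End K V) {N : Submodule K V}
    (hN : ∀ x ∈ N, f x ∈ N) : minpoly K (f.restrict hN) ∣ minpoly K f :=
  minpoly.dvd _ _ <| LinearMap.ext fun x => Subtype.ext <| by
    rw [aeval_restrict_apply, minpoly.aeval, LinearMap.zero_apply, LinearMap.zero_apply,
      ZeroMemClass.coe_zero]

theorem HasEigenvalue.exists_dual_comp_eq_smul [FiniteDimensional K V] {f : End K V} {μ : K}
    (hμ : f.HasEigenvalue μ) : ∃ φ : Dual K V, φ ≠ 0 ∧ φ ∘ₗ f = μ • φ := by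
  obtain ⟨v, hv⟩ := hμ.exists_hasEigenvector
  have hlt : LinearMap.range (f - algebraMap K (End K V) μ) < ⊤ := by
    rw [lt_top_iff_ne_top, Ne, LinearMap.range_eq_top, ← LinearMap.injective_iff_surjective]
    exact fun hinj => hv.2 (hinj (by simp [hv.apply_eq_smul]))
  obtain ⟨φ, hφ, hle⟩ := Submodule.exists_le_ker_of_lt_top _ hlt
  refine ⟨φ, hφ, LinearMap.ext fun x => ?_⟩
  simpa [sub_eq_zero] using hle ⟨x, rfl⟩

theorem exists_basis_forall_mem_span_image_Iic [FiniteDimensional K V] (f : End K V)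
    (hf : (minpoly K f).Splits) :
    ∃ (d : ℕ) (b : Basis (Fin d) K V),
      ∀ j, f (b j) ∈ Submodule.span K (b '' Set.Iic j) := by
  induction hd : finrank K V using Nat.strong_induction_on generalizing V with
  | _ d ih =>
  rcases subsingleton_or_nontrivial V with hV | hV
  · exact ⟨0, Basis.empty V, fun j => j.elim0⟩
  have hfint := Algebra.IsIntegral.isIntegral (R := K) f
  obtain ⟨μ, hμ⟩ := hf.exists_eval_eq_zero (minpoly.degree_pos hfint).ne'
  obtain ⟨φ, hφ0, hφf⟩ := (hasEigenvalue_of_isRoot hμ).exists_dual_comp_eq_smul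
  set N := LinearMap.ker φ
  have hN : ∀ x ∈ N, f x ∈ N := fun x hx => by
    simpa [N, show φ x = 0 from hx] using LinearMap.congr_fun hφf x
  have hNd : finrank K N < d := hd ▸ Submodule.finrank_lt (by
    rwa [Ne, LinearMap.ker_eq_top])
  obtain ⟨d', bN, hbN⟩ := ih _ hNd (f.restrict hN)
    (hf.of_dvd (minpoly.ne_zero hfint) (f.minpoly_restrict_dvd hN)) rfl
  obtain ⟨z, hz⟩ : ∃ z, φ z ≠ 0 := by
    by_contra! h
    exact hφ0 (LinearMap.ext h)
  set y := (φ z)⁻¹ • z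
  have hy : φ y = 1 := by simp [y, hz]
  let b := Basis.mkFinSnoc bN y (fun c x hx hcx => by
      simpa [hy, show φ x = 0 from hx] using congr_arg φ hcx)
    (fun x => ⟨-φ x, by simp [N, hy]⟩)
  refine ⟨d' + 1, b, Fin.lastCases ?_ fun j => ?_⟩
  · rw [show Set.Iic (Fin.last d') = Set.univ by ext; simp [Fin.le_last], Set.image_univ,
      b.span_eq]
    trivial
  · have hb : ∀ i, b i.castSucc = bN i := by simp [b]
    have := Submodule.mem_map_of_mem (f := N.subtype) (hbN j)
    rw [Submodule.map_span, ← Set.image_comp] at this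
    refine Submodule.span_mono ?_ (by simpa [hb] using this)
    rintro _ ⟨i, hi, rfl⟩
    exact ⟨i.castSucc, Fin.castSucc_le_castSucc_iff.mpr hi, hb i⟩

theorem hasEigenvalue_toMatrix_apply_self {ι : Type*} [Fintype ι] [DecidableEq ι]
    [LinearOrder ι] [FiniteDimensional K V] (f : End K V) (b : Basis ι K V)
    (hf : (LinearMap.toMatrix b b f).IsUpperTriangular) (i : ι) :
    f.HasEigenvalue (LinearMap.toMatrix b b f i i) := by
  rw [hasEigenvalue_iff_isRoot_charpoly, ← LinearMap.charpoly_toMatrix f b,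
    Matrix.charpoly_of_isUpperTriangular _ hf, IsRoot, eval_prod]
  exact Finset.prod_eq_zero (Finset.mem_univ i) (by simp)

theorem HasEigenvalue.pow_eq_one {f : End K V} {μ : K} (hμ : f.HasEigenvalue μ) {m : ℕ}
    (hf : f ^ m = 1) : μ ^ m = 1 := by
  obtain ⟨v, hv⟩ := (hμ.pow m).exists_hasEigenvector
  have h := hv.apply_eq_smul
  rw [hf, Module.End.one_apply] at h
  exact smul_left_injective K hv.2 (by simpa using h.symm)

end Module.End

theorem IsIntegrallyClosed.mem_range_algebraMap_of_pow_eq_one {R K : Type*} [CommRing R]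
    [CommRing K] [Algebra R K] [IsFractionRing R K] [IsIntegrallyClosed R] {x : K} {m : ℕ}
    (hm : 0 < m) (hx : x ^ m = 1) : x ∈ (algebraMap R K).range :=
  isIntegral_iff.mp (IsIntegral.of_pow hm (hx ▸ isIntegral_one))

namespace Matrix

theorem exists_diagonal_conj_eq_map_of_blockTriangular {R K ι : Type*} [CommRing R] [Field K]
    [Algebra R K] [IsFractionRing R K] [Fintype ι] [DecidableEq ι]
    {T : Matrix ι ι K} {ord : ι → ℕ} (hT : T.BlockTriangular ord)
    (hblock : ∀ i j, ord i = ord j → T i j ∈ (algebraMap R K).range) :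
    ∃ (D : GL ι K) (T₀ : Matrix ι ι R),
      ((D⁻¹ : GL ι K) : Matrix ι ι K) * T * (D : Matrix ι ι K) =
        T₀.map (algebraMap R K) := by
  obtain ⟨s, hs⟩ := IsLocalization.exist_integer_multiples (nonZeroDivisors R) Finset.univ
    (fun p : ι × ι => T p.1 p.2)
  set a := algebraMap R K s
  have ha : a ≠ 0 := (IsLocalization.map_units K s).ne_zero
  let D : GL ι K := ⟨diagonal fun i => a ^ ord i, diagonal fun i => (a ^ ord i)⁻¹,
    by simp [ha], by simp [ha]⟩
  have hentry : ∀ i j, (((D⁻¹ : GL ι K) : Matrix ι ι K) * T * (D : Matrix ι ι K)) i j =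
      (a ^ ord i)⁻¹ * T i j * a ^ ord j := by
    intro i j
    simp [D, diagonal_mul, mul_diagonal]
  have hint : ∀ i j, ∃ c : R, algebraMap R K c = (a ^ ord i)⁻¹ * T i j * a ^ ord j := by
    intro i j
    rcases lt_trichotomy (ord j) (ord i) with hlt | heq | hgt
    · exact ⟨0, by simp [hT hlt]⟩
    · obtain ⟨c, hc⟩ := hblock i j heq.symm
      exact ⟨c, by rw [hc, heq]; field_simp⟩
    · obtain ⟨k, hk⟩ := Nat.exists_eq_add_of_lt hgt
      obtain ⟨c, hc⟩ := hs (i, j) (Finset.mem_univ _)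
      refine ⟨s ^ k * c, ?_⟩
      rw [map_mul, map_pow, hc, hk, Algebra.smul_def]
      field_simp
      ring
  choose T₀ hT₀ using hint
  exact ⟨D, of T₀, by ext i j; rw [hentry, map_apply, of_apply, hT₀]⟩

theorem exists_units_conj_eq_toMatrix {R n : Type*} [CommRing R] [Fintype n] [DecidableEq n]
    (A : Matrix n n R) (c : Basis n R (n → R)) :
    ∃ P : GL n R, ((P⁻¹ : GL n R) : Matrix n n R) * A * (P : Matrix n n R) =
      LinearMap.toMatrix c c (toLin' A) := by
  refine ⟨⟨(Pi.basisFun R n).toMatrix c, c.toMatrix (Pi.basisFun R n),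
    Basis.toMatrix_mul_toMatrix_flip _ _, Basis.toMatrix_mul_toMatrix_flip _ _⟩, ?_⟩
  rw [← basis_toMatrix_mul_linearMap_toMatrix_mul_basis_toMatrix c (Pi.basisFun R n) c
    (Pi.basisFun R n), LinearMap.toMatrix_eq_toMatrix', LinearMap.toMatrix'_toLin']
  rfl

theorem exists_units_conj_blockTriangular {K n : Type*} [Field K] [Fintype n] [DecidableEq n]
    (A : Matrix n n K) (hA : A.charpoly.Splits) :
    ∃ (P : GL n K) (ord : n → ℕ), Function.Injective ord ∧
      (((P⁻¹ : GL n K) : Matrix n n K) * A * P).BlockTriangular ord ∧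
      ∀ i, Module.End.HasEigenvalue (toLin' A)
        ((((P⁻¹ : GL n K) : Matrix n n K) * A * P) i i) := by
  have hsplit : (minpoly K (toLin' A)).Splits := by
    rw [minpoly_toLin']
    exact hA.of_dvd A.charpoly_monic.ne_zero A.minpoly_dvd_charpoly
  obtain ⟨d, b, hb⟩ := Module.End.exists_basis_forall_mem_span_image_Iic _ hsplit
  have htri := (b.isUpperTriangular_toMatrix_iff _).mpr hb
  let e := b.indexEquiv (Pi.basisFun K n)
  obtain ⟨P, hP⟩ := exists_units_conj_eq_toMatrix A (b.reindex e)
  have hreindex : ∀ i j, LinearMap.toMatrix (b.reindex e) (b.reindex e) (toLin' A) i j =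
      LinearMap.toMatrix b b (toLin' A) (e.symm i) (e.symm j) := by
    simp [LinearMap.toMatrix_apply]
  refine ⟨P, fun i => e.symm i, Fin.val_injective.comp e.symm.injective,
    fun i j hij => ?_, fun i => ?_⟩ <;> rw [hP, hreindex]
  · exact htri hij
  · exact Module.End.hasEigenvalue_toMatrix_apply_self _ b htri _

namespace GeneralLinearGroup

theorem exists_map_eq_of_pow_eq_one {n R S : Type*} [Fintype n] [DecidableEq n] [CommRing R]
    [CommRing S] {φ : R →+* S} (hφ : Function.Injective φ) {g : GL n S} {m : ℕ}
    (hm : m ≠ 0) (hg : g ^ m = 1) {T₀ : Matrix n n R}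
    (hT₀ : (g : Matrix n n S) = T₀.map φ) :
    ∃ g₀ : GL n R, map φ g₀ = g := by
  have hpow : (T₀ ^ m).map φ = (1 : Matrix n n R).map φ := by
    rw [Matrix.map_pow, ← hT₀, ← Units.val_pow_eq_pow_val, hg, Units.val_one,
      Matrix.map_one _ φ.map_zero φ.map_one]
  obtain ⟨g₀, rfl⟩ := IsUnit.of_pow_eq_one (Matrix.map_injective hφ hpow) hm
  exact ⟨g₀, Units.ext hT₀.symm⟩

end GeneralLinearGroup

end Matrix

theorem finite_order_GL_conjugate_to_integral_general
    {R K : Type*} [CommRing R] [IsIntegrallyClosed R]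
    [Field K] [Algebra R K] [IsFractionRing R K]
    {n : Type*} [Fintype n] [DecidableEq n]
    (g : Matrix.GeneralLinearGroup n K)
    (m : ℕ) (hm : 1 ≤ m) (hord : g ^ m = 1)
    (hsplit : (Matrix.charpoly (g : Matrix n n K)).Splits) :
    ∃ (h : Matrix.GeneralLinearGroup n K) (g₀ : Matrix.GeneralLinearGroup n R),
      h⁻¹ * g * h = Matrix.GeneralLinearGroup.map (algebraMap R K) g₀ := by
  obtain ⟨P, ord, hinj, htri, heig⟩ := Matrix.exists_units_conj_blockTriangular _ hsplit
  have hgm : Matrix.toLin' (g : Matrix n n K) ^ m = 1 := by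
    rw [← Matrix.toLin'_pow, ← Units.val_pow_eq_pow_val, hord, Units.val_one, Matrix.toLin'_one]
    rfl
  obtain ⟨D, T₀, hD⟩ := Matrix.exists_diagonal_conj_eq_map_of_blockTriangular (R := R) htri
    fun i j hij => by
      obtain rfl := hinj hij
      exact IsIntegrallyClosed.mem_range_algebraMap_of_pow_eq_one hm ((heig i).pow_eq_one hgm)
  obtain ⟨g₀, hg₀⟩ := Matrix.GeneralLinearGroup.exists_map_eq_of_pow_eq_one
    (IsFractionRing.injective R K) (by omega : m ≠ 0) (g := (P * D)⁻¹ * g * (P * D))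
    (by rw [← inv_inv (P * D), inv_inv (P * D)⁻¹, conj_pow, hord, mul_one, mul_inv_cancel])
    (T₀ := T₀) (by rw [← hD]; simp only [mul_inv_rev, Units.val_mul, mul_assoc])
  exact ⟨P * D, g₀, hg₀.symm⟩

theorem finite_order_GL_conjugate_to_integral
    {R K : Type*} [CommRing R] [IsDomain R] [IsIntegrallyClosed R]
    [Field K] [Algebra R K] [IsFractionRing R K]
    {n : Type*} [Fintype n] [DecidableEq n]
    (g : Matrix.GeneralLinearGroup n K)
    (m : ℕ) (hm : 1 ≤ m) (hord : g ^ m = 1)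
    (hsplit : (Matrix.charpoly (g : Matrix n n K)).Splits) :
    ∃ (h : Matrix.GeneralLinearGroup n K) (g₀ : Matrix.GeneralLinearGroup n R),
      h⁻¹ * g * h = Matrix.GeneralLinearGroup.map (algebraMap R K) g₀ :=
  finite_order_GL_conjugate_to_integral_general g m hm hord hsplit
end

section
/- Let R be a commutative ring and let (x, y) be a regular sequence in R, i.e. x is a nonzerodivisor on R and y is a nonzerodivisor on R/(x). Then for every flat R-module M the sequence 0 → M → M_x ⊕ M_y → M_{xy} is exact, where M_x, M_y, M_{xy} denote the localizations of M at the powers of x, y and xy respectively, the first map is m ↦ (m/1, m/1), and the second map sends (u, v) to the difference of their images in M_{xy}. -/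
/-!
Flatness transports the regular sequence `(x, y)` from `R` to `M`, and a regular pair `(s, t)`
on `M` has the Koszul property: `t • a = s • b` forces `a = s • m` and `b = t • m` for some `m`.
Regularity of `(s, t)` passes to `(s ^ p, t ^ q)`. If `a / x ^ n` and `b / y ^ k` agree in
`M_{xy}`, then `(xy) ^ N • (y ^ k • a - x ^ n • b) = 0`, i.e.
`y ^ (N + k) • x ^ N • a = x ^ (N + n) • y ^ N • b`, and the Koszul property for
`(x ^ (N + n), y ^ (N + k))` produces the common preimage `m`.
-/

open RingTheory.Sequence Pointwise

section RegularPair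

variable {R M : Type*} [CommRing R] [AddCommGroup M] [Module R M]

theorem isWeaklyRegular_pair_iff_mem_of_smul_mem (s t : R) :
    IsWeaklyRegular M [s, t] ↔ IsSMulRegular M s ∧
      ∀ m : M, t • m ∈ s • (⊤ : Submodule R M) → m ∈ s • (⊤ : Submodule R M) := by
  rw [isWeaklyRegular_cons_iff, isWeaklyRegular_singleton_iff,
    isSMulRegular_quotient_iff_mem_of_smul_mem]

theorem isWeaklyRegular_pair_iff_exists_eq_smul (s t : R) :
    IsWeaklyRegular M [s, t] ↔ IsSMulRegular M s ∧
      ∀ a b : M, t • a = s • b → ∃ m : M, a = s • m ∧ b = t • m := by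
  simp only [isWeaklyRegular_pair_iff_mem_of_smul_mem, Submodule.mem_smul_pointwise_iff_exists,
    Submodule.mem_top, true_and]
  refine and_congr_right fun hs => ⟨fun h a b hab => ?_, fun h a ⟨b, hb⟩ => ?_⟩
  · obtain ⟨m, rfl⟩ := h a ⟨b, hab.symm⟩
    exact ⟨m, rfl, hs (show s • b = s • t • m by rw [← hab, smul_comm])⟩
  · obtain ⟨m, rfl, -⟩ := h a b hb.symm
    exact ⟨m, rfl⟩

namespace RingTheory.Sequence.IsWeaklyRegular

theorem exists_eq_smul_of_smul_eq_smul {s t : R} (h : IsWeaklyRegular M [s, t]) {a b : M}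
    (hab : t • a = s • b) : ∃ m : M, a = s • m ∧ b = t • m :=
  ((isWeaklyRegular_pair_iff_exists_eq_smul s t).mp h).2 a b hab

theorem isSMulRegular_head {s t : R} (h : IsWeaklyRegular M [s, t]) : IsSMulRegular M s :=
  ((isWeaklyRegular_pair_iff_exists_eq_smul s t).mp h).1

theorem pow_right {s t : R} (h : IsWeaklyRegular M [s, t]) (q : ℕ) :
    IsWeaklyRegular M [s, t ^ q] := by
  rw [isWeaklyRegular_cons_iff, isWeaklyRegular_singleton_iff] at h ⊢
  exact ⟨h.1, h.2.pow q⟩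

theorem pow_left {s t : R} (h : IsWeaklyRegular M [s, t]) (p : ℕ) :
    IsWeaklyRegular M [s ^ p, t] := by
  induction p with
  | zero =>
    rw [isWeaklyRegular_pair_iff_mem_of_smul_mem, pow_zero, one_smul]
    exact ⟨IsSMulRegular.one M, fun _ _ => Submodule.mem_top⟩
  | succ p ih =>
    rw [isWeaklyRegular_pair_iff_exists_eq_smul] at h ih ⊢
    refine ⟨h.1.pow (p + 1), fun a b hab => ?_⟩
    obtain ⟨m, rfl, hm⟩ := h.2 a (s ^ p • b) (by rw [hab, pow_succ', mul_smul])
    obtain ⟨m', rfl, rfl⟩ := ih.2 m b hm.symm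
    exact ⟨m', by rw [smul_smul, ← pow_succ'], rfl⟩

theorem of_flat_module [Module.Flat R M] {rs : List R} (h : IsWeaklyRegular R rs) :
    IsWeaklyRegular M rs :=
  ((TensorProduct.rid R M).isWeaklyRegular_congr rs).mp (h.isWeaklyRegular_lTensor (M₂ := M))

end RingTheory.Sequence.IsWeaklyRegular

theorem isWeaklyRegular_pair_of_mem_nonZeroDivisors {x y : R} (hx : x ∈ nonZeroDivisors R)
    (hy : ∀ r : R, y * r ∈ Ideal.span {x} → r ∈ Ideal.span {x}) :
    IsWeaklyRegular R [x, y] := by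
  have hspan : x • (⊤ : Submodule R R) = Ideal.span {x} := by
    rw [← Submodule.ideal_span_singleton_smul, smul_eq_mul, Ideal.mul_top]
  rw [isWeaklyRegular_pair_iff_mem_of_smul_mem, hspan]
  exact ⟨Module.Flat.isSMulRegular_of_nonZeroDivisors hx, hy⟩

end RegularPair

namespace IsLocalizedModule.Away

variable {R M N : Type*} [CommRing R] [AddCommGroup M] [Module R M] [AddCommGroup N] [Module R N]
  (f : M →ₗ[R] N) {r : R} [IsLocalizedModule.Away r f]

variable (r) in
include f in
theorem pow_smul_injective (n : ℕ) : Function.Injective fun u : N => r ^ n • u :=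
  IsLocalizedModule.smul_injective f (⟨r ^ n, n, rfl⟩ : Submonoid.powers r)

theorem apply_eq_of_pow_smul_eq {u : N} {a m : M} {n k : ℕ} (hu : r ^ n • u = f a)
    (ha : r ^ k • a = r ^ (k + n) • m) : f m = u :=
  pow_smul_injective f r (k + n) <| show r ^ (k + n) • f m = r ^ (k + n) • u by
    rw [← map_smul, ← ha, map_smul, ← hu, pow_add, mul_smul]

theorem injective_of_isSMulRegular (hr : IsSMulRegular M r) : Function.Injective f :=
  (IsLocalizedModule.injective_iff_isRegular (.powers r) f).mpr fun ⟨_, n, hn⟩ => hn ▸ hr.pow n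

end IsLocalizedModule.Away

namespace RingTheory.Sequence.IsWeaklyRegular

variable {R M Mx My Mxy : Type*} [CommRing R] [AddCommGroup M] [Module R M]
  [AddCommGroup Mx] [Module R Mx] [AddCommGroup My] [Module R My]
  [AddCommGroup Mxy] [Module R Mxy] {x y : R}
  {ℓx : M →ₗ[R] Mx} {ℓy : M →ₗ[R] My} {ℓxy : M →ₗ[R] Mxy}
  [IsLocalizedModule.Away x ℓx] [IsLocalizedModule.Away y ℓy] [IsLocalizedModule.Away (x * y) ℓxy]
  {f : Mx →ₗ[R] Mxy} {g : My →ₗ[R] Mxy}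

theorem exists_eq_of_map_eq_map (hreg : IsWeaklyRegular M [x, y])
    (hf : ∀ m, f (ℓx m) = ℓxy m) (hg : ∀ m, g (ℓy m) = ℓxy m) {u : Mx} {v : My}
    (huv : f u = g v) : ∃ m : M, ℓx m = u ∧ ℓy m = v := by
  obtain ⟨n, a, ha⟩ := IsLocalizedModule.Away.surj ℓx x u
  obtain ⟨k, b, hb⟩ := IsLocalizedModule.Away.surj ℓy y v
  have hab : ℓxy (y ^ k • a) = ℓxy (x ^ n • b) := by
    rw [map_smul, map_smul, ← hf, ← hg, ← ha, ← hb, map_smul, map_smul, huv, smul_comm]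
  obtain ⟨N, hN⟩ := IsLocalizedModule.Away.exists_of_eq (x * y) hab
  have hkey : y ^ (N + k) • x ^ N • a = x ^ (N + n) • y ^ N • b := by
    simp only [smul_smul, mul_pow, pow_add] at hN ⊢
    convert hN using 2 <;> ring
  obtain ⟨m, ham, hbm⟩ :=
    ((hreg.pow_left (N + n)).pow_right (N + k)).exists_eq_smul_of_smul_eq_smul hkey
  exact ⟨m, IsLocalizedModule.Away.apply_eq_of_pow_smul_eq ℓx ha (by rw [ham, pow_add, mul_smul]),
    IsLocalizedModule.Away.apply_eq_of_pow_smul_eq ℓy hb (by rw [hbm, pow_add, mul_smul])⟩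

theorem exact_prod_sub_of_localizationAway (hreg : IsWeaklyRegular M [x, y])
    (hf : ∀ m, f (ℓx m) = ℓxy m) (hg : ∀ m, g (ℓy m) = ℓxy m) :
    Function.Exact (ℓx.prod ℓy) (f ∘ₗ LinearMap.fst R Mx My - g ∘ₗ LinearMap.snd R Mx My) := by
  rintro ⟨u, v⟩
  simp only [LinearMap.sub_apply, LinearMap.comp_apply, LinearMap.fst_apply,
    LinearMap.snd_apply, sub_eq_zero, Set.mem_range, LinearMap.prod_apply, Function.prod,
    Prod.mk.injEq]
  refine ⟨hreg.exists_eq_of_map_eq_map hf hg, ?_⟩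
  rintro ⟨m, rfl, rfl⟩
  rw [hf, hg]

end RingTheory.Sequence.IsWeaklyRegular

theorem flat_module_localization_sequence_exact
    {R : Type*} [CommRing R] (x y : R)
    (hx : x ∈ nonZeroDivisors R)
    (hy : ∀ r : R, y * r ∈ Ideal.span {x} → r ∈ Ideal.span {x})
    (M : Type*) [AddCommGroup M] [Module R M] [Module.Flat R M]
    (f : LocalizedModule (Submonoid.powers x) M →ₗ[R]
        LocalizedModule (Submonoid.powers (x * y)) M)
    (g : LocalizedModule (Submonoid.powers y) M →ₗ[R]
        LocalizedModule (Submonoid.powers (x * y)) M)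
    (hf : ∀ m : M, f (LocalizedModule.mkLinearMap (Submonoid.powers x) M m) =
        LocalizedModule.mkLinearMap (Submonoid.powers (x * y)) M m)
    (hg : ∀ m : M, g (LocalizedModule.mkLinearMap (Submonoid.powers y) M m) =
        LocalizedModule.mkLinearMap (Submonoid.powers (x * y)) M m) :
    Function.Injective
      ((LocalizedModule.mkLinearMap (Submonoid.powers x) M).prod
        (LocalizedModule.mkLinearMap (Submonoid.powers y) M)) ∧
    Function.Exact
      (⇑((LocalizedModule.mkLinearMap (Submonoid.powers x) M).prod
        (LocalizedModule.mkLinearMap (Submonoid.powers y) M)))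
      (⇑(f.comp (LinearMap.fst R (LocalizedModule (Submonoid.powers x) M)
            (LocalizedModule (Submonoid.powers y) M)) -
         g.comp (LinearMap.snd R (LocalizedModule (Submonoid.powers x) M)
            (LocalizedModule (Submonoid.powers y) M)))) := by
  have hreg : IsWeaklyRegular M [x, y] :=
    (isWeaklyRegular_pair_of_mem_nonZeroDivisors hx hy).of_flat_module
  exact ⟨fun m m' h => IsLocalizedModule.Away.injective_of_isSMulRegular _
      hreg.isSMulRegular_head (congrArg Prod.fst h),
    hreg.exact_prod_sub_of_localizationAway hf hg⟩
end

section
/- Let R be a DVR with uniformizer π and let n ≥ 1 be an integer. The kernel of the R-algebra homomorphism R[s,t] → R[t,t⁻¹] determined by s ↦ π·t^{−n} and t ↦ t is the principal ideal generated by s·t^n − π. Consequently the induced map identifies R[s,t]/(s t^n − π) with the R-subalgebra R[t, π t^{−n}] of R[t,t⁻¹]. -/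
/-!
Write `f = s tⁿ - π`. Since `s · tⁿ ≡ π` modulo `f`, every `p ∈ R[s,t]` satisfies
`tᵏ p ≡ Q(t) (mod f)` for some `k` and some one-variable polynomial `Q`. If `p` is in the
kernel, applying the map gives `Q(t) = 0` in `R[t,t⁻¹]`, hence `Q = 0` and `f ∣ tᵏ p`.
As `t` is prime in `R[s,t]` and does not divide `f` (the constant term of `f` is `-π ≠ 0`),
`f ∣ p`. The image is generated by the images `π t⁻ⁿ` and `t` of the variables.
-/

open MvPolynomial LaurentPolynomial

theorem Prime.dvd_of_dvd_pow_mul {M : Type*} [CommMonoidWithZero M] [IsCancelMulZero M]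
    {p a b : M} (hp : Prime p) (hpa : ¬p ∣ a) {k : ℕ} (h : a ∣ p ^ k * b) : a ∣ b := by
  induction k with
  | zero => simpa using h
  | succ k ih =>
    rw [pow_succ', mul_assoc] at h
    exact ih ((hp.left_dvd_or_dvd_right_of_dvd_mul h).resolve_left hpa)

theorem Polynomial.aeval_T_one_eq_toLaurent {R : Type*} [CommSemiring R] (Q : Polynomial R) :
    Polynomial.aeval (T 1 : LaurentPolynomial R) Q = Polynomial.toLaurent Q := by
  rw [← Polynomial.toLaurent_X, ← Polynomial.coe_toLaurentAlg, Polynomial.aeval_algHom_apply,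
    Polynomial.aeval_X_left_apply]

namespace MvPolynomial

theorem exists_pow_mul_eq_aeval_of_mul_pow_eq {R A : Type*} [CommSemiring R] [CommSemiring A]
    [Algebra R A] {π : R} {n : ℕ} (g : MvPolynomial (Fin 2) R →ₐ[R] A)
    (hg : g (X 0) * g (X 1) ^ n = algebraMap R A π) (p : MvPolynomial (Fin 2) R) :
    ∃ (k : ℕ) (Q : Polynomial R), g (X 1) ^ k * g p = Polynomial.aeval (g (X 1)) Q := by
  induction p using MvPolynomial.induction_on with
  | C a => exact ⟨0, Polynomial.C a, by simp⟩
  | add p q hp hq =>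
    obtain ⟨k, P, hP⟩ := hp
    obtain ⟨l, Q, hQ⟩ := hq
    refine ⟨k + l, Polynomial.X ^ l * P + Polynomial.X ^ k * Q, ?_⟩
    simp only [map_add, map_mul, map_pow, Polynomial.aeval_X, ← hP, ← hQ]
    ring
  | mul_X p i hp =>
    obtain ⟨k, Q, hQ⟩ := hp
    fin_cases i <;> simp only [Fin.zero_eta, Fin.mk_one]
    · refine ⟨k + n, Polynomial.C π * Q, ?_⟩
      simp only [map_mul, Polynomial.aeval_C, ← hQ, ← hg]
      ring
    · refine ⟨k, Polynomial.X * Q, ?_⟩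
      simp only [map_mul, Polynomial.aeval_X, ← hQ]
      ring

variable {R : Type*} [CommRing R]

theorem X_one_not_dvd_X_zero_mul_X_one_pow_sub_C {π : R} (hπ : π ≠ 0) (n : ℕ) :
    ¬(X 1 : MvPolynomial (Fin 2) R) ∣ X 0 * X 1 ^ n - C π := by
  rintro ⟨g, hg⟩
  exact hπ (by simpa using congrArg constantCoeff hg)

variable (π : R) (n : ℕ)

noncomputable def laurentMap : MvPolynomial (Fin 2) R →ₐ[R] LaurentPolynomial R :=
  aeval ![LaurentPolynomial.C π * T (-(n : ℤ)), T 1]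

theorem laurentMap_X_one : laurentMap π n (X 1) = T 1 := by
  simp [laurentMap]

theorem laurentMap_X_zero_mul_X_one_pow_sub_C : laurentMap π n (X 0 * X 1 ^ n - C π) = 0 := by
  simp [laurentMap, T_pow]

variable {π} in
theorem ker_laurentMap [IsDomain R] (hπ : π ≠ 0) :
    RingHom.ker (laurentMap π n) = Ideal.span {X 0 * X 1 ^ n - C π} := by
  set I := Ideal.span {(X 0 : MvPolynomial (Fin 2) R) * X 1 ^ n - C π}
  have hI : I ≤ RingHom.ker (laurentMap π n) :=
    (Ideal.span_singleton_le_iff_mem _).2 (laurentMap_X_zero_mul_X_one_pow_sub_C π n)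
  refine le_antisymm (fun p hp => ?_) hI
  have hmk : Ideal.Quotient.mkₐ R I (X 0) * Ideal.Quotient.mkₐ R I (X 1) ^ n =
      algebraMap R _ π := by
    rw [← map_pow, ← map_mul, ← AlgHom.commutes (Ideal.Quotient.mkₐ R I), ← sub_eq_zero,
      ← map_sub, Ideal.Quotient.mkₐ_eq_mk, Ideal.Quotient.eq_zero_iff_mem]
    exact Ideal.subset_span rfl
  obtain ⟨k, Q, hQ⟩ := exists_pow_mul_eq_aeval_of_mul_pow_eq (Ideal.Quotient.mkₐ R I) hmk p
  have hQ0 : Q = 0 := by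
    let ψ := Ideal.Quotient.liftₐ I (laurentMap π n) fun a ha => hI ha
    have hψ (x) : ψ (Ideal.Quotient.mkₐ R I x) = laurentMap π n x := rfl
    have h := congrArg ψ hQ
    rw [map_mul, map_pow, ← Polynomial.aeval_algHom_apply, hψ, hψ, laurentMap_X_one,
      RingHom.mem_ker.1 hp, mul_zero, Polynomial.aeval_T_one_eq_toLaurent] at h
    exact Polynomial.toLaurent_eq_zero.1 h.symm
  rw [hQ0, map_zero, ← map_pow, ← map_mul, Ideal.Quotient.mkₐ_eq_mk,
    Ideal.Quotient.eq_zero_iff_mem, Ideal.mem_span_singleton] at hQ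
  exact Ideal.mem_span_singleton.2
    (X_prime.dvd_of_dvd_pow_mul (X_one_not_dvd_X_zero_mul_X_one_pow_sub_C hπ n) hQ)

theorem range_laurentMap :
    (laurentMap π n).range = Algebra.adjoin R {T 1, LaurentPolynomial.C π * T (-(n : ℤ))} := by
  rw [laurentMap, ← Algebra.adjoin_range_eq_range_aeval, Matrix.range_cons_cons_empty,
    Set.pair_comm]

end MvPolynomial

theorem kernel_of_aeval_to_laurent_eq_span_general
    {R : Type*} [CommRing R] [IsDomain R]
    (π : R) (hπ : Irreducible π) (n : ℕ) :
    RingHom.ker (MvPolynomial.aeval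
        (![LaurentPolynomial.C π * LaurentPolynomial.T (-(n : ℤ)),
           LaurentPolynomial.T 1] : Fin 2 → LaurentPolynomial R) :
          MvPolynomial (Fin 2) R →ₐ[R] LaurentPolynomial R) =
      Ideal.span {(X 0 : MvPolynomial (Fin 2) R) * X 1 ^ n - MvPolynomial.C π} ∧
    (MvPolynomial.aeval
        (![LaurentPolynomial.C π * LaurentPolynomial.T (-(n : ℤ)),
           LaurentPolynomial.T 1] : Fin 2 → LaurentPolynomial R) :
          MvPolynomial (Fin 2) R →ₐ[R] LaurentPolynomial R).range =
      Algebra.adjoin R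
        ({LaurentPolynomial.T 1,
          LaurentPolynomial.C π * LaurentPolynomial.T (-(n : ℤ))} :
          Set (LaurentPolynomial R)) :=
  ⟨ker_laurentMap n hπ.ne_zero, range_laurentMap π n⟩

theorem kernel_of_aeval_to_laurent_eq_span
    {R : Type*} [CommRing R] [IsDomain R] [IsDiscreteValuationRing R]
    (π : R) (hπ : Irreducible π) (n : ℕ) (hn : 1 ≤ n) :
    RingHom.ker (MvPolynomial.aeval
        (![LaurentPolynomial.C π * LaurentPolynomial.T (-(n : ℤ)),
           LaurentPolynomial.T 1] : Fin 2 → LaurentPolynomial R) :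
          MvPolynomial (Fin 2) R →ₐ[R] LaurentPolynomial R) =
      Ideal.span {(X 0 : MvPolynomial (Fin 2) R) * X 1 ^ n - MvPolynomial.C π} ∧
    (MvPolynomial.aeval
        (![LaurentPolynomial.C π * LaurentPolynomial.T (-(n : ℤ)),
           LaurentPolynomial.T 1] : Fin 2 → LaurentPolynomial R) :
          MvPolynomial (Fin 2) R →ₐ[R] LaurentPolynomial R).range =
      Algebra.adjoin R
        ({LaurentPolynomial.T 1,
          LaurentPolynomial.C π * LaurentPolynomial.T (-(n : ℤ))} :
          Set (LaurentPolynomial R)) :=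
  kernel_of_aeval_to_laurent_eq_span_general π hπ n
end

section
/- Let j: U → T be an open immersion of schemes such that the canonical map O_T → j_* O_U is an isomorphism of sheaves of rings. Let f: X → Y be an affine morphism of schemes and let g: T → Y be any morphism. Then composition with j gives a bijection between morphisms h: T → X satisfying f∘h = g and morphisms h′: U → X satisfying f∘h′ = g∘j; in particular, every Y-morphism U → X extends uniquely to a Y-morphism T → X. -/
/-!
Over an affine open `V ⊆ Y` the preimage `f⁻¹V` is affine, so morphisms `g⁻¹V ⟶ f⁻¹V` are
ring maps out of `Γ(f⁻¹V)`, and `j` identifies `Γ(g⁻¹V)` with `Γ(j⁻¹g⁻¹V)`. Hence a `Y`-morphism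
`U ⟶ X` extends uniquely over each `g⁻¹V`. The hypothesis on `j` passes to its restrictions to
opens of `T`, so the same uniqueness holds on overlaps and the local extensions glue.
-/

open AlgebraicGeometry CategoryTheory

namespace AlgebraicGeometry

open Limits Scheme.Hom

universe u

lemma bijective_comp_of_isIso_appTop {A B Z : Scheme.{u}} (k : A ⟶ B) [IsIso k.appTop]
    [IsAffine Z] : Function.Bijective fun h : B ⟶ Z => k ≫ h := by
  refine ⟨fun h₁ h₂ e => ext_of_isAffine ?_, fun h => ?_⟩
  · simpa only [comp_appTop, cancel_mono] using congrArg Scheme.Hom.appTop e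
  · refine ⟨B.toSpecΓ ≫ Spec.map (h.appTop ≫ inv k.appTop) ≫ Z.isoSpec.inv, ?_⟩
    simp only [Scheme.toSpecΓ_naturality_assoc, ← Spec.map_comp_assoc, IsIso.inv_hom_id,
      Category.assoc, Category.comp_id]
    simp [← Scheme.toSpecΓ_naturality_assoc, Scheme.isoSpec]

lemma exists_extension_of_isIso_appTop {A B X Y : Scheme.{u}} (k : A ⟶ B) [IsIso k.appTop]
    (f : X ⟶ Y) [IsAffine X] [IsAffine Y] (g : B ⟶ Y) {h' : A ⟶ X} (hh' : h' ≫ f = k ≫ g) :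
    ∃ h : B ⟶ X, h ≫ f = g ∧ k ≫ h = h' := by
  obtain ⟨h, rfl⟩ := (bijective_comp_of_isIso_appTop k).2 h'
  exact ⟨h, (bijective_comp_of_isIso_appTop k).1 (by simpa using hh'), rfl⟩

lemma isIso_morphismRestrict_app {U T : Scheme.{u}} {j : U ⟶ T}
    (hj : ∀ V : T.Opens, IsIso (j.app V)) (W : T.Opens) (V : W.toScheme.Opens) :
    IsIso ((j ∣_ W).app V) := by
  rw [morphismRestrict_app]
  exact IsIso.comp_isIso' (hj _) (Functor.map_isIso _ _)

lemma Scheme.exists_hom_of_isOpenCover {X Y : Scheme.{u}} {ι : Type*} (W : ι → X.Opens)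
    (hW : TopologicalSpace.IsOpenCover W) (t : ∀ i, (W i).toScheme ⟶ Y)
    (ht : ∀ i k, X.homOfLE inf_le_left ≫ t i = X.homOfLE inf_le_right ≫ t k) :
    ∃ h : X ⟶ Y, ∀ i, (W i).ι ≫ h = t i :=
  ⟨(X.openCoverOfIsOpenCover W hW).glueMorphisms t fun (i k : ι) => by
      change pullback.fst (W i).ι (W k).ι ≫ t i = pullback.snd (W i).ι (W k).ι ≫ t k
      rw [← cancel_epi (isPullback_opens_inf (W i) (W k)).isoPullback.hom,
        IsPullback.isoPullback_hom_fst_assoc, IsPullback.isoPullback_hom_snd_assoc, ht],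
    (X.openCoverOfIsOpenCover W hW).ι_glueMorphisms t _⟩

variable {U T X Y : Scheme.{u}} {j : U ⟶ T}

theorem eq_of_comp_eq_of_isIso_app (hj : ∀ V : T.Opens, IsIso (j.app V)) (f : X ⟶ Y)
    [IsAffineHom f] {h₁ h₂ : T ⟶ X} (hf : h₁ ≫ f = h₂ ≫ f) (e : j ≫ h₁ = j ≫ h₂) : h₁ = h₂ := by
  let g := h₁ ≫ f
  refine (T.openCoverOfIsOpenCover (fun V : Y.affineOpens => g ⁻¹ᵁ V)
    (.comap (iSup_affineOpens_eq_top Y) g.base.hom)).hom_ext _ _ fun (V : Y.affineOpens) => ?_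
  have : IsAffine (f ⁻¹ᵁ V) := V.2.preimage f
  have : IsIso (j ∣_ g ⁻¹ᵁ V).appTop := isIso_morphismRestrict_app hj _ ⊤
  have le₁ : g ⁻¹ᵁ V ≤ h₁ ⁻¹ᵁ f ⁻¹ᵁ V := le_rfl
  have le₂ : g ⁻¹ᵁ V ≤ h₂ ⁻¹ᵁ f ⁻¹ᵁ V := by rw [← comp_preimage, ← hf]
  change (g ⁻¹ᵁ V).ι ≫ h₁ = (g ⁻¹ᵁ V).ι ≫ h₂
  rw [← resLE_comp_ι h₁ le₁, ← resLE_comp_ι h₂ le₂]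
  congr 1
  apply (bijective_comp_of_isIso_appTop (j ∣_ g ⁻¹ᵁ V)).1
  simp only [← resLE_eq_morphismRestrict, resLE_comp_resLE, e]

lemma exists_extension_on_preimage (hj : ∀ V : T.Opens, IsIso (j.app V)) (f : X ⟶ Y)
    [IsAffineHom f] (g : T ⟶ Y) {h' : U ⟶ X} (hh' : h' ≫ f = j ≫ g) (V : Y.affineOpens) :
    ∃ t : (g ⁻¹ᵁ V).toScheme ⟶ X,
      t ≫ f = (g ⁻¹ᵁ V).ι ≫ g ∧ j ∣_ (g ⁻¹ᵁ V) ≫ t = (j ⁻¹ᵁ g ⁻¹ᵁ V).ι ≫ h' := by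
  have : IsAffine V := V.2
  have : IsAffine (f ⁻¹ᵁ V) := V.2.preimage f
  have : IsIso (j ∣_ g ⁻¹ᵁ V).appTop := isIso_morphismRestrict_app hj _ ⊤
  have le : j ⁻¹ᵁ g ⁻¹ᵁ V ≤ h' ⁻¹ᵁ f ⁻¹ᵁ V := by rw [← comp_preimage, ← hh']; rfl
  obtain ⟨r, hr_f, hr_j⟩ := exists_extension_of_isIso_appTop (j ∣_ g ⁻¹ᵁ V) (f ∣_ V) (g ∣_ V)
    (h' := h'.resLE _ _ le) (by simp [← cancel_mono (Scheme.Opens.ι _), hh'])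
  refine ⟨r ≫ (f ⁻¹ᵁ V).ι, ?_, ?_⟩
  · rw [Category.assoc, ← morphismRestrict_ι, reassoc_of% hr_f, morphismRestrict_ι]
  · rw [reassoc_of% hr_j, resLE_comp_ι]

theorem exists_extension_of_isIso_app (hj : ∀ V : T.Opens, IsIso (j.app V)) (f : X ⟶ Y)
    [IsAffineHom f] (g : T ⟶ Y) {h' : U ⟶ X} (hh' : h' ≫ f = j ≫ g) :
    ∃ h : T ⟶ X, h ≫ f = g ∧ j ≫ h = h' := by
  choose t ht_f ht_j using exists_extension_on_preimage hj f g hh'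
  have hW : TopologicalSpace.IsOpenCover fun V : Y.affineOpens => g ⁻¹ᵁ V :=
    .comap (iSup_affineOpens_eq_top Y) g.base.hom
  have ht_j_le (V : Y.affineOpens) {W : T.Opens} (hWV : W ≤ g ⁻¹ᵁ V) :
      j ∣_ W ≫ T.homOfLE hWV ≫ t V = (j ⁻¹ᵁ W).ι ≫ h' := by
    rw [morphismRestrict_homOfLE_assoc, ht_j, ← Category.assoc, Scheme.homOfLE_ι]
  obtain ⟨h, hh⟩ := Scheme.exists_hom_of_isOpenCover _ hW t fun V V' =>
    eq_of_comp_eq_of_isIso_app (isIso_morphismRestrict_app hj _) f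
      (by simp only [Category.assoc, ht_f, Scheme.homOfLE_ι_assoc])
      (by rw [ht_j_le, ht_j_le])
  refine ⟨h, ?_, ?_⟩
  · refine (T.openCoverOfIsOpenCover _ hW).hom_ext _ _ fun (V : Y.affineOpens) => ?_
    change (g ⁻¹ᵁ V).ι ≫ h ≫ f = (g ⁻¹ᵁ V).ι ≫ g
    rw [← Category.assoc, hh, ht_f]
  · refine (U.openCoverOfIsOpenCover _ (hW.comap j.base.hom)).hom_ext _ _
      fun (V : Y.affineOpens) => ?_
    change (j ⁻¹ᵁ g ⁻¹ᵁ V).ι ≫ j ≫ h = (j ⁻¹ᵁ g ⁻¹ᵁ V).ι ≫ h'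
    rw [← morphismRestrict_ι_assoc, hh, ht_j]

end AlgebraicGeometry

theorem affine_morphism_extension_along_pushforward_iso
    {U T X Y : Scheme} (j : U ⟶ T)
    (hj : ∀ V : T.Opens, IsIso (j.app V))
    (f : X ⟶ Y) [IsAffineHom f] (g : T ⟶ Y) :
    Function.Bijective
      (fun h : { h : T ⟶ X // h ≫ f = g } =>
        (⟨j ≫ h.1, by rw [Category.assoc, h.2]⟩ : { h' : U ⟶ X // h' ≫ f = j ≫ g })) := by
  refine ⟨fun h₁ h₂ e => Subtype.ext ?_, fun h' => ?_⟩
  · exact eq_of_comp_eq_of_isIso_app hj f (h₁.2.trans h₂.2.symm) (congrArg Subtype.val e)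
  · obtain ⟨h, hf, hjh⟩ := exists_extension_of_isIso_app hj f g h'.2
    exact ⟨⟨h, hf⟩, Subtype.ext hjh⟩
end

section
/- Let R be a DVR with uniformizer π and let Λ be a Noetherian R-algebra. Let E₁ and E₂ be finitely generated Λ-modules which are flat over R, and let φ: E₁[1/π] → E₂[1/π] be an isomorphism of Λ[1/π]-modules between their localizations at the powers of π. For each n ∈ ℤ set G_n := { e ∈ E₁ : π^n · φ(e/1) lies in the image of E₂ in E₂[1/π] }. Then: (1) each G_n is a finitely generated Λ-submodule of E₁; (2) G_n = E₁ for all sufficiently large n; and (3) G_{−n−1} = π·G_{−n} for all sufficiently large n. -/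
/-!
Let `R` be a DVR with uniformizer `π` and `Λ` a Noetherian `R`-algebra.  Let `E₁`, `E₂` be
finitely generated `Λ`-modules which are flat over `R`, and `φ : E₁[1/π] ≃ E₂[1/π]` an
isomorphism between their localizations at the powers of `π` (it is automatically
`Λ[1/π]`-linear).  For `n ∈ ℤ` set `G_n := { e ∈ E₁ : π^n · φ(e/1) ∈ image of E₂ }`,
expressed without inverting `π` as: `π^(max n 0) · φ(e/1) ∈ π^(max (−n) 0) · (image of E₂)`.
Then: (1) each `G_n` is a finitely generated `Λ`-submodule of `E₁`;
(2) `G_n = E₁` for all sufficiently large `n`; and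
(3) `G_{−n−1} = π·G_{−n}` for all sufficiently large `n`.
-/

open LocalizedModule Pointwise

noncomputable section

variable {R : Type*} [CommRing R] [IsDomain R] [IsDiscreteValuationRing R] (π : R)
variable {Λ : Type*} [CommRing Λ] [Algebra R Λ] [IsNoetherianRing Λ]
variable (E₁ E₂ : Type*) [AddCommGroup E₁] [Module Λ E₁] [AddCommGroup E₂] [Module Λ E₂]
variable (φ : LocalizedModule (Submonoid.powers (algebraMap R Λ π)) E₁ ≃ₗ[Λ]
    LocalizedModule (Submonoid.powers (algebraMap R Λ π)) E₂)

/-- The submodule `G_n = { e ∈ E₁ : π^n · φ(e/1) lies in the image of E₂ }` of `E₁`. -/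
def Gsub (n : ℤ) : Submodule Λ E₁ :=
  Submodule.comap
    ((algebraMap R Λ π ^ n.toNat) •
      (φ.toLinearMap.comp (mkLinearMap (Submonoid.powers (algebraMap R Λ π)) E₁)))
    (LinearMap.range
      ((algebraMap R Λ π ^ (-n).toNat) •
        mkLinearMap (Submonoid.powers (algebraMap R Λ π)) E₂))

/-!
As `E₁` is finitely generated, a single power of `π` clears the denominators of `φ` on all of
`E₁`, so `G_n = E₁` for large `n`; likewise a power `π^N` clears those of `φ⁻¹` on `E₂`. For
`n ≥ N` and `e ∈ G_{-n-1}`, say `φ(e) = π^(n+1) f`, the element `e' := φ⁻¹(π^n f)` lies in `E₁`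
and in `G_{-n}`, and `e = π e'` holds in `E₁[1/π]`, hence in `E₁` because `E₁` is flat, i.e.
`π`-torsion free. Finite generation of `G_n` is the Noetherianity of `Λ`.
-/

open IsLocalizedModule (IsInteger)

section ClearingDenominators

variable {A : Type*} [CommRing A] (p : A) {M M' N N' : Type*}
  [AddCommGroup M] [Module A M] [AddCommGroup M'] [Module A M']
  [AddCommGroup N] [Module A N] [AddCommGroup N'] [Module A N']

lemma exists_pow_smul_isInteger_of_finite [Module.Finite A M]
    (f : M →ₗ[A] M') [IsLocalizedModule (Submonoid.powers p) f]
    (g : N →ₗ[A] N') [IsLocalizedModule (Submonoid.powers p) g] (ψ : M' →ₗ[A] N') :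
    ∃ N : ℕ, ∀ k ≥ N, ∀ m : M, IsInteger g (p ^ k • ψ (f m)) := by
  obtain ⟨t, ht⟩ := Module.Finite.fg_top (R := A) (M := M)
  obtain ⟨⟨_, N, rfl⟩, hN⟩ :=
    IsLocalizedModule.exist_integer_multiples (Submonoid.powers p) g t (ψ ∘ f)
  have hN_top : ⊤ ≤ (LinearMap.range g).comap (p ^ N • (ψ ∘ₗ f)) := by
    rw [← ht, Submodule.span_le]
    exact hN
  refine ⟨N, fun k hk m => ?_⟩
  rw [← Nat.sub_add_cancel hk, pow_add, mul_smul]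
  exact IsLocalizedModule.isInteger_smul g (hN_top Submodule.mem_top)

lemma mkLinearMap_powers_injective (hp : IsSMulRegular M p) :
    Function.Injective (mkLinearMap (Submonoid.powers p) M) :=
  (IsLocalizedModule.injective_iff_isRegular (Submonoid.powers p) _).mpr fun ⟨_, k, hk⟩ =>
    hk ▸ hp.pow k

end ClearingDenominators

section Gsub

omit [IsDomain R] [IsDiscreteValuationRing R] [IsNoetherianRing Λ]

local notation "ϖ" => algebraMap R Λ π
local notation "S" => Submonoid.powers (algebraMap R Λ π)

lemma mem_Gsub_natCast_iff (k : ℕ) {e : E₁} :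
    e ∈ Gsub π E₁ E₂ φ k ↔ IsInteger (mkLinearMap S E₂) (ϖ ^ k • φ (mkLinearMap S E₁ e)) := by
  simp [Gsub, IsInteger]

lemma mem_Gsub_neg_natCast_iff (k : ℕ) {e : E₁} :
    e ∈ Gsub π E₁ E₂ φ (-k) ↔ ∃ f : E₂, ϖ ^ k • mkLinearMap S E₂ f = φ (mkLinearMap S E₁ e) := by
  simp [Gsub]

lemma mem_Gsub_neg_sub_one_iff (k : ℕ) {e : E₁} :
    e ∈ Gsub π E₁ E₂ φ (-k - 1) ↔
      ∃ f : E₂, ϖ ^ (k + 1) • mkLinearMap S E₂ f = φ (mkLinearMap S E₁ e) := by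
  rw [show -(k : ℤ) - 1 = -(k + 1 : ℕ) by push_cast; ring, mem_Gsub_neg_natCast_iff]

lemma exists_Gsub_eq_top [Module.Finite Λ E₁] : ∃ N : ℤ, ∀ n ≥ N, Gsub π E₁ E₂ φ n = ⊤ := by
  obtain ⟨N, hN⟩ := exists_pow_smul_isInteger_of_finite ϖ (mkLinearMap S E₁) (mkLinearMap S E₂)
    φ.toLinearMap
  refine ⟨N, fun n hn => ?_⟩
  lift n to ℕ using (Int.natCast_nonneg N).trans hn
  exact eq_top_iff.mpr fun e _ => (mem_Gsub_natCast_iff π E₁ E₂ φ n).mpr (hN n (by omega) e)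

lemma smul_Gsub_neg_le (k : ℕ) : ϖ • Gsub π E₁ E₂ φ (-k) ≤ Gsub π E₁ E₂ φ (-k - 1) := by
  intro x hx
  obtain ⟨e, he, rfl⟩ := (Submodule.mem_smul_pointwise_iff_exists _ _ _).mp hx
  rw [mem_Gsub_neg_sub_one_iff]
  obtain ⟨f, hf⟩ := (mem_Gsub_neg_natCast_iff π E₁ E₂ φ k).mp he
  exact ⟨f, by rw [map_smul, map_smul, ← hf, pow_succ', mul_smul]⟩

lemma Gsub_neg_sub_one_le_smul (hreg : IsSMulRegular E₁ ϖ) (k : ℕ)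
    (hk : ∀ f : E₂, IsInteger (mkLinearMap S E₁) (ϖ ^ k • φ.symm (mkLinearMap S E₂ f))) :
    Gsub π E₁ E₂ φ (-k - 1) ≤ ϖ • Gsub π E₁ E₂ φ (-k) := by
  intro e he
  obtain ⟨f, hf⟩ := (mem_Gsub_neg_sub_one_iff π E₁ E₂ φ k).mp he
  obtain ⟨e', he'⟩ := hk f
  have hφe' : φ (mkLinearMap S E₁ e') = ϖ ^ k • mkLinearMap S E₂ f := by
    rw [he', map_smul, LinearEquiv.apply_symm_apply]
  have he_eq : e = ϖ • e' := by
    refine mkLinearMap_powers_injective ϖ hreg (φ.injective ?_)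
    rw [map_smul, map_smul, hφe', ← hf, pow_succ', mul_smul]
  rw [he_eq]
  exact Submodule.smul_mem_pointwise_smul e' _ _
    ((mem_Gsub_neg_natCast_iff π E₁ E₂ φ k).mpr ⟨f, hφe'.symm⟩)

lemma exists_Gsub_neg_sub_one_eq_smul [Module.Finite Λ E₂] (hreg : IsSMulRegular E₁ ϖ) :
    ∃ N : ℕ, ∀ n ≥ N, Gsub π E₁ E₂ φ (-n - 1) = ϖ • Gsub π E₁ E₂ φ (-n) := by
  obtain ⟨N, hN⟩ := exists_pow_smul_isInteger_of_finite ϖ (mkLinearMap S E₂) (mkLinearMap S E₁)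
    φ.symm.toLinearMap
  exact ⟨N, fun n hn => le_antisymm (Gsub_neg_sub_one_le_smul π E₁ E₂ φ hreg n (hN n hn))
    (smul_Gsub_neg_le π E₁ E₂ φ n)⟩

end Gsub

theorem gluing_submodules_fg_and_stabilize
    (hπ : Irreducible π)
    [Module R E₁] [IsScalarTower R Λ E₁]
    [Module.Finite Λ E₁] [Module.Finite Λ E₂]
    [Module.Flat R E₁] :
    (∀ n : ℤ, (Gsub π E₁ E₂ φ n).FG) ∧
    (∃ N : ℤ, ∀ n ≥ N, Gsub π E₁ E₂ φ n = ⊤) ∧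
    (∃ N : ℕ, ∀ n ≥ N,
      Gsub π E₁ E₂ φ (-(n : ℤ) - 1) = algebraMap R Λ π • Gsub π E₁ E₂ φ (-(n : ℤ))) := by
  have hreg : IsSMulRegular E₁ (algebraMap R Λ π) := (isSMulRegular_algebraMap_iff Λ).mpr
    (Module.Flat.isSMulRegular_of_isRegular (IsRegular.of_ne_zero hπ.ne_zero))
  exact ⟨fun n => IsNoetherian.noetherian _, exists_Gsub_eq_top π E₁ E₂ φ,
    exists_Gsub_neg_sub_one_eq_smul π E₁ E₂ φ hreg⟩

end
end
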